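/- A quasi-stationary point process under iid non-degenerate increments cannot have a finite number n ≥ 2 of points almost surely: a quasi-stationary process has either one point or infinitely many points almost surely. -/

import Mathlib

open MeasureTheory ProbabilityTheory Set Filter Topology
open scoped ENNReal

/-!
Let `S = X₀ - X_last` be the span of the configuration and `D = h₀ - h_last`. After the move the
top point lies at or above `X₀ + h₀` and the bottom one at or below `X_last + h_last`, so the new
span dominates `S + D`, while quasi-stationarity says that it has the law of `S`. Since `D` is
independent of `S`, the tail `H t = P(S > t)` is superharmonic for the random walk with step law
`ν = law D`: `∫ H (t - d) dν(d) ≤ H t`. Stopping this walk when it first climbs by `a > |t|` gives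
`H t ≥ P(the walk climbs by a)`. As `ν` is symmetric and not concentrated at `0`, the walk leaves
`(-a, a)` almost surely, through either end with the same probability, so `H t ≥ 1/2` for every
`t`, contradicting `H t → 0`.
-/

theorem Fin.sum_castSucc_sub_succ {n : ℕ} (f : Fin (n + 1) → ℝ) :
    ∑ i : Fin n, (f i.castSucc - f i.succ) = f 0 - f (Fin.last n) := by
  have h₁ := Fin.sum_univ_castSucc f
  have h₂ := Fin.sum_univ_succ f
  rw [Finset.sum_sub_distrib]
  linarith

theorem tendsto_measure_Ioi_atTop (ρ : Measure ℝ) [IsFiniteMeasure ρ] :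
    Tendsto (fun t => ρ (Ioi t)) atTop (𝓝 0) := by
  have hempty : ⋂ t : ℝ, Ioi t = ∅ := eq_empty_of_forall_notMem fun x hx =>
    lt_irrefl x (mem_iInter.mp hx x)
  have := tendsto_measure_iInter_atTop (μ := ρ) (s := Ioi)
    (fun t => measurableSet_Ioi.nullMeasurableSet) (fun _ _ hst => Ioi_subset_Ioi hst)
    ⟨0, measure_ne_top ρ _⟩
  rwa [hempty, measure_empty] at this

theorem exists_gt_measure_Ici_pos {ν : Measure ℝ} {a : ℝ} (h : 0 < ν (Ioi a)) :
    ∃ b > a, 0 < ν (Ici b) := by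
  by_contra! hnull
  have hcover : ⋃ n : ℕ, Ici (a + 1 / (n + 1)) = Ioi a :=
    iUnion_Ici_eq_Ioi_of_lt_of_tendsto (fun n => by simp; positivity)
      (by simpa using tendsto_one_div_add_atTop_nhds_zero_nat.const_add a)
  refine h.ne' ?_
  rw [← hcover, measure_iUnion_null_iff]
  exact fun n => nonpos_iff_eq_zero.mp (hnull _ (by simp; positivity))

theorem ENNReal.add_mul_one_sub_pow_le {p q : ℝ≥0∞} (hpq : q + p = 1) (j : ℕ) :
    q + p * (1 - p ^ j) ≤ 1 - p ^ (j + 1) := by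
  have hp : p ≤ 1 := hpq ▸ le_add_self
  refine ENNReal.le_sub_of_add_le_left (ENNReal.pow_ne_top (ne_top_of_le_ne_top (by simp) hp))
    (le_of_eq ?_)
  calc p ^ (j + 1) + (q + p * (1 - p ^ j)) = q + p * (p ^ j + (1 - p ^ j)) := by ring
    _ = 1 := by rw [add_tsub_cancel_of_le (pow_le_one₀ zero_le hp), mul_one, hpq]

theorem map_Ioi_eq_one_of_ae_nonneg {Ω : Type*} [MeasurableSpace Ω] {μ : Measure Ω}
    [IsProbabilityMeasure μ] {S : Ω → ℝ} (hS : Measurable S)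
    (h : ∀ᵐ ω ∂μ, 0 ≤ S ω) {t : ℝ} (ht : t < 0) : μ.map S (Ioi t) = 1 := by
  rw [Measure.map_apply hS measurableSet_Ioi, ← measure_univ (μ := μ)]
  exact (ae_iff_measure_eq (hS measurableSet_Ioi).nullMeasurableSet).mp
    (h.mono fun ω hω => ht.trans_le hω)

theorem measure_Ioi_pos_of_isNegInvariant {ν : Measure ℝ} [IsProbabilityMeasure ν]
    [ν.IsNegInvariant] (h0 : ν {0} = 0) : 0 < ν (Ioi 0) := by
  have hneg : ν (Iio 0) = ν (Ioi 0) := by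
    rw [← Measure.measure_neg, neg_Iio, neg_zero]
  have hsum : ν (Iio 0) + ν {0} + ν (Ioi 0) = 1 := by
    rw [← measure_union (by simp) (measurableSet_singleton 0), ← measure_union (by simp)
      measurableSet_Ioi, Iio_union_right, Iic_union_Ioi, measure_univ]
  rw [hneg, h0, add_zero] at hsum
  exact pos_of_ne_zero fun h => by simp [h] at hsum

theorem sub_le_first_sub_last {n : ℕ} {y z : Fin (n + 1) → ℝ} (hy : Antitone y)
    (σ : Equiv.Perm (Fin (n + 1))) (hσ : ∀ i, y i = z (σ i)) (i j : Fin (n + 1)) :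
    z i - z j ≤ y 0 - y (Fin.last n) := by
  have hi : z i ≤ y 0 := by simpa [hσ] using hy (Fin.zero_le (σ.symm i))
  have hj : y (Fin.last n) ≤ z j := by simpa [hσ] using hy (Fin.le_last (σ.symm j))
  linarith

theorem map_sub_last_eq_map_sum_gaps {Ω : Type*} [MeasurableSpace Ω] {μ : Measure Ω} {n : ℕ}
    {Z : Ω → Fin (n + 1) → ℝ} (hZ : Measurable Z) :
    μ.map (fun ω => Z ω 0 - Z ω (Fin.last n)) =
      (μ.map fun ω (i : Fin n) => Z ω i.castSucc - Z ω i.succ).map fun v => ∑ i, v i := by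
  rw [Measure.map_map (by fun_prop) (by fun_prop)]
  congr 1
  funext ω
  exact (Fin.sum_castSucc_sub_succ (Z ω)).symm

namespace ProbabilityTheory

variable {Ω : Type*} [MeasurableSpace Ω] {μ : Measure Ω} [IsFiniteMeasure μ] {X Y : Ω → ℝ}

theorem IndepFun.isNegInvariant_map_sub (hX : Measurable X) (hY : Measurable Y)
    (hXY : IndepFun X Y μ) (hlaw : μ.map X = μ.map Y) :
    (μ.map fun ω => X ω - Y ω).IsNegInvariant := by
  have hpair : μ.map (fun ω => (X ω, Y ω)) = (μ.map Y).prod (μ.map Y) := by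
    rw [(indepFun_iff_map_prod_eq_prod_map_map hX.aemeasurable hY.aemeasurable).mp hXY, hlaw]
  have hsub : μ.map (fun ω => X ω - Y ω) =
      (μ.map fun ω => (X ω, Y ω)).map fun p => p.1 - p.2 := by
    rw [Measure.map_map (by fun_prop) (by fun_prop)]; rfl
  have hswap : (Neg.neg ∘ fun p : ℝ × ℝ => p.1 - p.2) = (fun p => p.1 - p.2) ∘ Prod.swap :=
    funext fun p => neg_sub p.1 p.2
  constructor
  rw [Measure.neg, hsub, hpair, Measure.map_map (by fun_prop) (by fun_prop), hswap,
    ← Measure.map_map (by fun_prop) measurable_swap, Measure.prod_swap]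

theorem IndepFun.map_sub_singleton_zero [NullSingletonClass (μ.map X)] (hX : Measurable X)
    (hY : Measurable Y) (hXY : IndepFun X Y μ) :
    μ.map (fun ω => X ω - Y ω) {0} = 0 := by
  have hdiag : MeasurableSet {p : ℝ × ℝ | p.1 = p.2} := measurableSet_diagonal
  rw [Measure.map_apply (by fun_prop) (measurableSet_singleton 0)]
  calc μ ((fun ω => X ω - Y ω) ⁻¹' {0}) = μ.map (fun ω => (X ω, Y ω)) {p | p.1 = p.2} := by
        rw [Measure.map_apply (by fun_prop) hdiag]
        congr 1; ext ω; simp [sub_eq_zero]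
    _ = 0 := by
        rw [(indepFun_iff_map_prod_eq_prod_map_map hX.aemeasurable hY.aemeasurable).mp hXY,
          Measure.prod_apply_symm hdiag]
        simp [Set.preimage]

theorem IndepFun.measure_lt_add (hX : Measurable X) (hY : Measurable Y) (hXY : IndepFun X Y μ)
    (t : ℝ) : μ {ω | t < X ω + Y ω} = ∫⁻ x, μ.map Y (Ioi (t - x)) ∂μ.map X := by
  have hset : {ω | t < X ω + Y ω} = (X + Y) ⁻¹' Ioi t := rfl
  rw [hset, ← Measure.map_apply (by fun_prop) measurableSet_Ioi,
    hXY.map_add_eq_map_conv_map hX hY, ← lintegral_indicator_one measurableSet_Ioi,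
    Measure.lintegral_conv (measurable_one.indicator measurableSet_Ioi)]
  refine lintegral_congr fun x => ?_
  rw [← lintegral_indicator_one measurableSet_Ioi]
  congr 1; ext y
  simp only [indicator, mem_Ioi, Pi.one_apply, sub_lt_iff_lt_add']

theorem IndepFun.lintegral_measure_Ioi_sub_le {D S S' : Ω → ℝ} (hD : Measurable D)
    (hS : Measurable S) (hS' : Measurable S') (hDS : IndepFun D S μ) (hlaw : μ.map S' = μ.map S)
    (hdom : ∀ᵐ ω ∂μ, D ω + S ω ≤ S' ω) (t : ℝ) :
    ∫⁻ d, μ.map S (Ioi (t - d)) ∂μ.map D ≤ μ.map S (Ioi t) :=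
  calc _ = μ {ω | t < D ω + S ω} := (hDS.measure_lt_add hD hS t).symm
    _ ≤ μ {ω | t < S' ω} := measure_mono_ae <| by
        filter_upwards [hdom] with ω hω ht using ht.trans_le hω
    _ = μ.map S (Ioi t) := by rw [← hlaw, Measure.map_apply hS' measurableSet_Ioi]; rfl

end ProbabilityTheory

namespace RandomWalk

variable (ν : Measure ℝ)

/-- `reachProb ν N b` is the probability that the random walk with step law `ν` rises by at least
`b` within `N` steps, and `stayProb ν N u v` the probability that it stays in `(-u, v)` for `N`
steps; both are computed by conditioning on the first step. -/
noncomputable def reachProb : ℕ → ℝ → ℝ≥0∞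
  | 0 => fun _ => 0
  | N + 1 => fun b => ∫⁻ d, (if b ≤ d then 1 else reachProb N (b - d)) ∂ν

noncomputable def stayProb : ℕ → ℝ → ℝ → ℝ≥0∞
  | 0 => fun _ _ => 1
  | N + 1 => fun u v => ∫⁻ d, (if -u < d ∧ d < v then stayProb N (u + d) (v - d) else 0) ∂ν

theorem measurable_reachProb [SFinite ν] (N : ℕ) : Measurable (reachProb ν N) := by
  induction N with
  | zero => exact measurable_const
  | succ N ih =>
    have : Measurable fun q : ℝ × ℝ => if q.1 ≤ q.2 then 1 else reachProb ν N (q.1 - q.2) :=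
      .ite (measurableSet_le measurable_fst measurable_snd) measurable_const (by fun_prop)
    exact this.lintegral_prod_right'

theorem measurable_stayProb [SFinite ν] (N : ℕ) :
    Measurable (Function.uncurry (stayProb ν N)) := by
  induction N with
  | zero => exact measurable_const
  | succ N ih =>
    have : Measurable fun q : (ℝ × ℝ) × ℝ =>
        if -q.1.1 < q.2 ∧ q.2 < q.1.2 then stayProb ν N (q.1.1 + q.2) (q.1.2 - q.2) else 0 := by
      refine .ite ((measurableSet_lt (by fun_prop) measurable_snd).inter
        (measurableSet_lt measurable_snd (by fun_prop))) ?_ measurable_const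
      exact ih.comp (f := fun q : (ℝ × ℝ) × ℝ => (q.1.1 + q.2, q.1.2 - q.2)) (by fun_prop)
    exact this.lintegral_prod_right'

theorem mul_reachProb_le {H : ℝ → ℝ≥0∞} (hH : Antitone H)
    (hsup : ∀ t, ∫⁻ d, H (t - d) ∂ν ≤ H t) (N : ℕ) (t b : ℝ) :
    H (t - b) * reachProb ν N b ≤ H t := by
  induction N generalizing t b with
  | zero => simp [reachProb]
  | succ N ih =>
    calc H (t - b) * reachProb ν (N + 1) b
        ≤ ∫⁻ d, H (t - b) * (if b ≤ d then 1 else reachProb ν N (b - d)) ∂ν :=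
          lintegral_const_mul_le _ _
      _ ≤ ∫⁻ d, H (t - d) ∂ν := by
          refine lintegral_mono fun d => ?_
          split_ifs with hbd
          · simpa using hH (by linarith : t - d ≤ t - b)
          · simpa [sub_sub_sub_cancel_right] using ih (t - d) (b - d)
      _ ≤ H t := hsup t

theorem reachProb_succ_eq [ν.IsNegInvariant] (N : ℕ) (b : ℝ) :
    reachProb ν (N + 1) b = ∫⁻ d, (if d ≤ -b then 1 else reachProb ν N (b + d)) ∂ν := by
  conv_lhs => rw [reachProb]; beta_reduce; rw [← lintegral_neg_eq_self]
  simp only [le_neg, sub_neg_eq_add]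

variable [IsProbabilityMeasure ν]

theorem one_le_stayProb_add_reachProb [ν.IsNegInvariant] (N : ℕ) {u v : ℝ} (hu : 0 < u)
    (hv : 0 < v) : 1 ≤ stayProb ν N u v + reachProb ν N v + reachProb ν N u := by
  induction N generalizing u v with
  | zero => simp [stayProb, reachProb]
  | succ N ih =>
    have hexit : ∀ d : ℝ, 1 ≤ (if -u < d ∧ d < v then stayProb ν N (u + d) (v - d) else 0)
        + (if v ≤ d then 1 else reachProb ν N (v - d))
        + (if d ≤ -u then 1 else reachProb ν N (u + d)) := by
      intro d
      by_cases hvd : v ≤ d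
      · rw [if_pos hvd]; exact le_add_right le_add_self
      by_cases hdu : d ≤ -u
      · rw [if_pos hdu]; exact le_add_self
      have hd : -u < d ∧ d < v := ⟨by linarith, by linarith⟩
      simpa [hd, hvd, hdu] using ih (u := u + d) (v := v - d) (by linarith) (by linarith)
    calc (1 : ℝ≥0∞) = ∫⁻ _, 1 ∂ν := by simp
      _ ≤ _ := lintegral_mono hexit
      _ = stayProb ν (N + 1) u v + reachProb ν (N + 1) v + reachProb ν (N + 1) u := by
        rw [lintegral_add_right _ ?_, lintegral_add_right _ ?_, reachProb_succ_eq ν N u]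
        · rfl
        · exact .ite (measurableSet_le measurable_const measurable_id) measurable_const
            ((measurable_reachProb ν N).comp (by fun_prop))
        · exact .ite measurableSet_Iic measurable_const
            ((measurable_reachProb ν N).comp (by fun_prop))

theorem stayProb_succ_le (N : ℕ) (u v : ℝ) : stayProb ν (N + 1) u v ≤ stayProb ν N u v := by
  induction N generalizing u v with
  | zero =>
    calc stayProb ν 1 u v ≤ ∫⁻ _, 1 ∂ν := lintegral_mono fun d => by split_ifs <;> simp [stayProb]
      _ = 1 := by simp
  | succ N ih =>
    refine lintegral_mono fun d => ?_
    split_ifs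
    · exact ih _ _
    · exact le_rfl

theorem antitone_stayProb (u v : ℝ) : Antitone fun N => stayProb ν N u v :=
  antitone_nat_of_succ_le fun N => stayProb_succ_le ν N u v

theorem stayProb_add_le {N : ℕ} {ε w : ℝ} {c : ℝ≥0∞}
    (hc : ∀ u v, 0 < u → 0 < v → u + v = w → stayProb ν N u v ≤ c) (j : ℕ) {u v : ℝ}
    (hu : 0 < u) (hv : 0 < v) (huv : u + v = w) (hvj : v ≤ j * ε) :
    stayProb ν (N + j) u v ≤ c * (1 - ν (Ici ε) ^ j) := by
  -- a step of size at least `ε` brings the walk `ε` closer to `v`, so `j` of them in a row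
  -- force an exit
  induction j generalizing u v with
  | zero => linarith [show ((0 : ℕ) : ℝ) * ε = 0 by simp]
  | succ j ih =>
    set p := ν (Ici ε)
    have hstep : ∀ d, (if -u < d ∧ d < v then stayProb ν (N + j) (u + d) (v - d) else 0)
        ≤ (Iio ε).indicator (fun _ => c) d + (Ici ε).indicator (fun _ => c * (1 - p ^ j)) d := by
      intro d
      split_ifs with hd
      · have hd_u : 0 < u + d := by linarith [hd.1]
        have hd_v : 0 < v - d := by linarith [hd.2]
        by_cases hdε : d < ε
        · rw [indicator_of_mem (show d ∈ Iio ε from hdε)]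
          calc stayProb ν (N + j) (u + d) (v - d) ≤ stayProb ν N (u + d) (v - d) :=
                antitone_stayProb ν _ _ (Nat.le_add_right N j)
            _ ≤ c := hc _ _ hd_u hd_v (by linarith)
            _ ≤ _ := le_self_add
        · rw [indicator_of_mem (show d ∈ Ici ε from not_lt.mp hdε)]
          refine (ih hd_u hd_v (by linarith) ?_).trans le_add_self
          push_cast at hvj
          linarith [not_lt.mp hdε]
      · exact zero_le
    have hq : ν (Iio ε) + p = 1 := by
      rw [← measure_union (Iio_disjoint_Ici le_rfl) measurableSet_Ici, Iio_union_Ici,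
        measure_univ]
    calc stayProb ν (N + (j + 1)) u v
        ≤ ∫⁻ d, ((Iio ε).indicator (fun _ => c) d
            + (Ici ε).indicator (fun _ => c * (1 - p ^ j)) d) ∂ν := lintegral_mono hstep
      _ = c * (ν (Iio ε) + p * (1 - p ^ j)) := by
        rw [lintegral_add_left (measurable_const.indicator measurableSet_Iio),
          lintegral_indicator measurableSet_Iio, lintegral_indicator measurableSet_Ici,
          setLIntegral_const, setLIntegral_const]
        ring
      _ ≤ c * (1 - p ^ (j + 1)) := by
        gcongr
        exact ENNReal.add_mul_one_sub_pow_le hq j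

theorem stayProb_mul_le {K : ℕ} {ε w : ℝ} (hw : w ≤ K * ε) (M : ℕ) {u v : ℝ} (hu : 0 < u)
    (hv : 0 < v) (huv : u + v = w) : stayProb ν (M * K) u v ≤ (1 - ν (Ici ε) ^ K) ^ M := by
  induction M generalizing u v with
  | zero => simp [stayProb]
  | succ M ih =>
    rw [add_one_mul, pow_succ]
    exact stayProb_add_le ν (fun _ _ => ih) K hu hv huv (by linarith)

theorem tendsto_stayProb_atTop (hν : 0 < ν (Ioi 0)) {u v : ℝ} (hu : 0 < u) (hv : 0 < v) :
    Tendsto (fun N => stayProb ν N u v) atTop (𝓝 0) := by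
  obtain ⟨ε, hε, hp⟩ := exists_gt_measure_Ici_pos hν
  obtain ⟨K, hK⟩ := exists_nat_ge ((u + v) / ε)
  rw [div_le_iff₀ hε] at hK
  have hK0 : K ≠ 0 := by rintro rfl; linarith [show ((0 : ℕ) : ℝ) * ε = 0 by simp]
  have hc : 1 - ν (Ici ε) ^ K < 1 :=
    ENNReal.sub_lt_self ENNReal.one_ne_top one_ne_zero (pow_ne_zero K hp.ne')
  refine tendsto_of_tendsto_of_tendsto_of_le_of_le tendsto_const_nhds
    ((ENNReal.tendsto_pow_atTop_nhds_zero_of_lt_one hc).comp (Nat.tendsto_div_const_atTop hK0))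
    (fun _ => zero_le) fun N => ?_
  calc stayProb ν N u v ≤ stayProb ν (N / K * K) u v :=
        antitone_stayProb ν u v (Nat.div_mul_le_self N K)
    _ ≤ _ := stayProb_mul_le ν hK (N / K) hu hv rfl

theorem not_tendsto_atTop_zero_of_superharmonic [ν.IsNegInvariant] (hν : 0 < ν (Ioi 0))
    {H : ℝ → ℝ≥0∞} (hH : Antitone H) (hH_neg : ∀ t < 0, H t = 1)
    (hsup : ∀ t, ∫⁻ d, H (t - d) ∂ν ≤ H t) : ¬ Tendsto H atTop (𝓝 0) := by
  have hbound : ∀ t, 1 ≤ 2 * H t := by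
    intro t
    set a := |t| + 1
    have ha : 0 < a := by positivity
    have hreach : ∀ N, reachProb ν N a ≤ H t := fun N => by
      simpa [hH_neg (t - a) (by linarith [le_abs_self t])] using mul_reachProb_le ν hH hsup N t a
    have hle : ∀ N, 1 ≤ stayProb ν N a a + 2 * H t := fun N => by
      calc (1 : ℝ≥0∞) ≤ stayProb ν N a a + reachProb ν N a + reachProb ν N a :=
            one_le_stayProb_add_reachProb ν N ha ha
        _ ≤ stayProb ν N a a + 2 * H t := by
          rw [add_assoc, ← two_mul]; gcongr; exact hreach N
    simpa using ge_of_tendsto' ((tendsto_stayProb_atTop ν hν ha ha).add_const (2 * H t)) hle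
  intro hlim
  simpa using ge_of_tendsto' (ENNReal.Tendsto.const_mul hlim (by simp)) hbound

end RandomWalk

theorem no_finite_quasiStationary_process_general
    {Ω : Type*} [MeasurableSpace Ω] (μ : Measure Ω) [IsProbabilityMeasure μ]
    (m : ℕ) (X h : Ω → Fin (m + 2) → ℝ)
    (hXm : Measurable X) (hhm : Measurable h)
    (hord : ∀ᵐ ω ∂μ, Antitone (X ω))
    (hident : ∀ i : Fin (m + 2),
      Measure.map (fun ω => h ω i) μ = Measure.map (fun ω => h ω 0) μ)
    (hindep : iIndepFun (fun i ω => h ω i) μ)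
    (hac : Measure.map (fun ω => h ω 0) μ ≪ MeasureTheory.volume)
    (hXh : IndepFun X h μ)
    (Y : Ω → Fin (m + 2) → ℝ) (hYm : Measurable Y)
    (hreord : ∀ᵐ ω ∂μ, Antitone (Y ω) ∧ ∃ σ : Equiv.Perm (Fin (m + 2)),
      ∀ i, Y ω i = X ω (σ i) + h ω (σ i))
    (hqs : Measure.map (fun ω (i : Fin (m + 1)) => Y ω i.castSucc - Y ω i.succ) μ
      = Measure.map (fun ω (i : Fin (m + 1)) => X ω i.castSucc - X ω i.succ) μ) :
    False := by
  set L := Fin.last (m + 1)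
  set S := fun ω => X ω 0 - X ω L
  set D := fun ω => h ω 0 - h ω L
  have hh : ∀ i, Measurable fun ω => h ω i := fun i => by fun_prop
  have hS : Measurable S := by fun_prop
  have hD : Measurable D := by fun_prop
  have h0L : IndepFun (fun ω => h ω 0) (fun ω => h ω L) μ := hindep.indepFun Fin.last_pos.ne
  have : IsProbabilityMeasure (μ.map D) := Measure.isProbabilityMeasure_map hD.aemeasurable
  have : (μ.map D).IsNegInvariant := h0L.isNegInvariant_map_sub (hh 0) (hh L) (hident L).symm
  have : NullSingletonClass (μ.map fun ω => h ω 0) := ⟨fun x => hac Real.volume_singleton⟩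
  have hν : 0 < μ.map D (Ioi 0) :=
    measure_Ioi_pos_of_isNegInvariant (h0L.map_sub_singleton_zero (hh 0) (hh L))
  have hlaw : μ.map (fun ω => Y ω 0 - Y ω L) = μ.map S := by
    rw [map_sub_last_eq_map_sum_gaps hYm, map_sub_last_eq_map_sum_gaps hXm, hqs]
  have hdom : ∀ᵐ ω ∂μ, D ω + S ω ≤ Y ω 0 - Y ω L := by
    filter_upwards [hreord] with ω ⟨hY, σ, hσ⟩
    have := sub_le_first_sub_last (z := fun k => X ω k + h ω k) hY σ hσ 0 L
    simp only [D, S]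
    linarith
  have hφ : Measurable fun v : Fin (m + 2) → ℝ => v 0 - v L := by fun_prop
  have hDS : IndepFun D S μ := (hXh.comp hφ hφ).symm
  refine RandomWalk.not_tendsto_atTop_zero_of_superharmonic (μ.map D) hν
    (fun s t hst => measure_mono (Ioi_subset_Ioi hst)) (fun t => map_Ioi_eq_one_of_ae_nonneg hS ?_)
    (hDS.lintegral_measure_Ioi_sub_le hD hS (by fun_prop) hlaw hdom) (tendsto_measure_Ioi_atTop _)
  filter_upwards [hord] with ω hω
  exact sub_nonneg.mpr (hω (Fin.zero_le L))

/-- a quasi-stationary point process under iid non-degenerate increments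
(having a density) cannot have a finite number `n ≥ 2` of points almost surely:
for a configuration of `n = m + 2` points, ordered decreasingly, invariance of the gap
law under the increment-and-reorder evolution is impossible. -/
theorem no_finite_quasiStationary_process
    {Ω : Type*} [MeasurableSpace Ω] (μ : Measure Ω) [IsProbabilityMeasure μ]
    (m : ℕ) (X h : Ω → Fin (m + 2) → ℝ)
    (hXm : Measurable X) (hhm : Measurable h)
    (hord : ∀ᵐ ω ∂μ, Antitone (X ω))
    (hident : ∀ i : Fin (m + 2),
      Measure.map (fun ω => h ω i) μ = Measure.map (fun ω => h ω 0) μ)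
    (hindep : iIndepFun (fun i ω => h ω i) μ)
    (hac : Measure.map (fun ω => h ω 0) μ ≪ MeasureTheory.volume)
    (hnondeg : ¬ ∃ c : ℝ, ∀ᵐ ω ∂μ, h ω 0 = c)
    (hXh : IndepFun X h μ)
    (Y : Ω → Fin (m + 2) → ℝ) (hYm : Measurable Y)
    (hreord : ∀ᵐ ω ∂μ, Antitone (Y ω) ∧ ∃ σ : Equiv.Perm (Fin (m + 2)),
      ∀ i, Y ω i = X ω (σ i) + h ω (σ i))
    (hqs : Measure.map (fun ω (i : Fin (m + 1)) => Y ω i.castSucc - Y ω i.succ) μ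
      = Measure.map (fun ω (i : Fin (m + 1)) => X ω i.castSucc - X ω i.succ) μ) :
    False :=
  no_finite_quasiStationary_process_general μ m X h hXm hhm hord hident hindep hac hXh Y hYm hreord
    hqs
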